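/- arXiv:2102.06498 — 2 statements merged into one kernel-verified Lean document; each statement's English description precedes it below -/
import Mathlib

section
/- Let A and B be positive contractions on a separable Hilbert space H (i.e., 0 ≤ A ≤ I and 0 ≤ B ≤ I), and suppose the null space of B is trivial. Then for every f ∈ H, (A − B)f = ∫₀^∞ e^{−tA}(A² − B²)e^{−tB} f dt, where the integral exists as an improper strong Riemann–Bochner integral. -/
open ContinuousLinearMap MeasureTheory Complex Filter Topology

noncomputable section

variable {H : Type} [NormedAddCommGroup H] [InnerProductSpace ℂ H] [CompleteSpace H]

/-- The absolute value `|A| = (A*A)^{1/2}` of a bounded operator. -/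
def absOp (A : H →L[ℂ] H) : H →L[ℂ] H := CFC.sqrt (adjoint A * A)

/-- `A` is trace class if `∑ ⟪e i, |A| e i⟫` is summable in every Hilbert basis. -/
def IsTraceClass (A : H →L[ℂ] H) : Prop :=
  ∀ (ι : Type) (b : HilbertBasis ι ℂ H), Summable fun i => inner (𝕜 := ℂ) (b i) (absOp A (b i))

/-- The trace of `A` computed along a Hilbert basis. -/
def traceAlong {ι : Type} (b : HilbertBasis ι ℂ H) (A : H →L[ℂ] H) : ℂ :=
  ∑' i, inner (𝕜 := ℂ) (b i) (A (b i))

/-- The trace norm of `A` computed along a Hilbert basis. -/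
def traceNormAlong {ι : Type} (b : HilbertBasis ι ℂ H) (A : H →L[ℂ] H) : ℝ :=
  ∑' i, (inner (𝕜 := ℂ) (b i) (absOp A (b i))).re

section Helpers
open NormedSpace
set_option maxHeartbeats 1000000
set_option synthInstance.maxHeartbeats 400000

lemma expNeg_eq (A : H →L[ℂ] H) (t : ℝ) :
    NormedSpace.exp ((-t : ℂ) • A) = NormedSpace.exp (t • (-A)) := by
  congr 1
  rw [show ((-t : ℂ)) = (((-t : ℝ) : ℂ)) by norm_num, Complex.coe_smul, smul_neg, ← neg_smul]

lemma cfc_exp_neg (B : H →L[ℂ] H) (hB : 0 ≤ B) (s : ℝ) :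
    NormedSpace.exp (s • (-B)) = cfc (fun x : ℝ => Real.exp (-(s * x))) B := by
  have hsa : IsSelfAdjoint B := .of_nonneg hB
  have h1 : s • (-B) = (-s) • B := by rw [smul_neg, neg_smul]
  have hsa2 : IsSelfAdjoint ((-s) • B) := IsSelfAdjoint.smul (r := (-s)) (star_trivial _) hsa
  rw [h1, ← CFC.real_exp_eq_normedSpace_exp hsa2,
    ← cfc_comp_smul (-s) Real.exp B Real.continuous_exp.continuousOn hsa]
  congr 1
  ext x
  simp [neg_mul]

lemma norm_expNeg_le_one (B : H →L[ℂ] H) (hB : 0 ≤ B) {s : ℝ} (hs : 0 ≤ s) :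
    ‖NormedSpace.exp (s • (-B))‖ ≤ 1 := by
  rw [cfc_exp_neg B hB s]
  refine norm_cfc_le zero_le_one fun x hx => ?_
  have hx0 : 0 ≤ x := spectrum_nonneg_of_nonneg hB hx
  rw [Real.norm_eq_abs, abs_of_pos (Real.exp_pos _)]
  calc Real.exp (-(s * x)) ≤ Real.exp 0 := Real.exp_le_exp.2 (by nlinarith)
  _ = 1 := Real.exp_zero

lemma norm_expNeg_mul_le (B : H →L[ℂ] H) (hB : 0 ≤ B) {s : ℝ} (hs : 0 < s) :
    ‖NormedSpace.exp (s • (-B)) * B‖ ≤ 1 / s := by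
  have hsa : IsSelfAdjoint B := .of_nonneg hB
  have h : NormedSpace.exp (s • (-B)) * B
      = cfc (fun x : ℝ => Real.exp (-(s * x)) * x) B := by
    rw [cfc_exp_neg B hB s]
    nth_rewrite 2 [← cfc_id ℝ B hsa]
    rw [← cfc_mul _ _ B ((by fun_prop : Continuous fun x : ℝ => Real.exp (-(s * x)))).continuousOn
      continuous_id.continuousOn]
    rfl
  rw [h]
  refine norm_cfc_le (by positivity) fun x hx => ?_
  have hx0 : 0 ≤ x := spectrum_nonneg_of_nonneg hB hx
  have h1 : s * x ≤ Real.exp (s * x) := by nlinarith [Real.add_one_le_exp (s * x)]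
  have h3 : (0:ℝ) < Real.exp (s * x) := Real.exp_pos _
  have h4 : |Real.exp (-(s * x)) * x| = Real.exp (-(s * x)) * x := abs_of_nonneg (by positivity)
  rw [Real.norm_eq_abs, h4, Real.exp_neg, inv_mul_le_iff₀ h3, mul_one_div, le_div_iff₀ hs]
  nlinarith

lemma dense_range_of_ker_bot (B : H →L[ℂ] H) (hsa : IsSelfAdjoint B)
    (hker : LinearMap.ker (B : H →ₗ[ℂ] H) = ⊥) : Dense ((LinearMap.range (B : H →ₗ[ℂ] H) : Submodule ℂ H) : Set H) := by
  rw [Submodule.dense_iff_topologicalClosure_eq_top,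
    ← Submodule.orthogonal_orthogonal_eq_closure]
  have horth : (LinearMap.range (B : H →ₗ[ℂ] H) : Submodule ℂ H)ᗮ = ⊥ := by
    rw [Submodule.eq_bot_iff]
    intro v hv
    have hBv : B v = 0 := by
      have h0 : inner (𝕜 := ℂ) (B (B v)) v = 0 :=
        hv (B (B v)) (LinearMap.mem_range_self _ _)
      have h1 : inner (𝕜 := ℂ) (B v) (B v) = 0 := by
        have h2 := ContinuousLinearMap.adjoint_inner_right B (B v) v
        rw [hsa.adjoint_eq] at h2
        rw [h2]; exact h0
      simpa [inner_self_eq_zero] using h1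
    have : v ∈ LinearMap.ker (B : H →ₗ[ℂ] H) := hBv
    rw [hker] at this
    simpa using this
  rw [horth, Submodule.bot_orthogonal_eq_top]

lemma tendsto_expNeg_apply (B : H →L[ℂ] H) (hB : 0 ≤ B)
    (hker : LinearMap.ker (B : H →ₗ[ℂ] H) = ⊥) (f : H) :
    Tendsto (fun s : ℝ => NormedSpace.exp (s • (-B)) f) atTop (𝓝 0) := by
  have hsa : IsSelfAdjoint B := .of_nonneg hB
  rw [Metric.tendsto_atTop]
  intro ε hε
  have hd := dense_range_of_ker_bot B hsa hker
  obtain ⟨y, hy, hyd⟩ := Metric.mem_closure_iff.1 (hd.closure_eq ▸ Set.mem_univ f) (ε/2) (by positivity)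
  obtain ⟨g, rfl⟩ := hy
  refine ⟨max 1 (2 * ‖g‖ / ε + 1), fun s hsN => ?_⟩
  have hs1 : (1:ℝ) ≤ s := le_trans (le_max_left _ _) hsN
  have hs0 : (0:ℝ) < s := lt_of_lt_of_le one_pos hs1
  have hsg : 2 * ‖g‖ / ε + 1 ≤ s := le_trans (le_max_right _ _) hsN
  rw [dist_eq_norm, sub_zero]
  have hsplit : NormedSpace.exp (s • (-B)) f
      = NormedSpace.exp (s • (-B)) (f - B g) + (NormedSpace.exp (s • (-B)) * B) g := by
    simp [ContinuousLinearMap.mul_apply, map_sub]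
  rw [hsplit]
  have h1 : ‖NormedSpace.exp (s • (-B)) (f - B g)‖ < ε / 2 := by
    calc ‖NormedSpace.exp (s • (-B)) (f - B g)‖
        ≤ ‖NormedSpace.exp (s • (-B))‖ * ‖f - B g‖ := le_opNorm _ _
      _ ≤ 1 * ‖f - B g‖ := by
          gcongr; exact norm_expNeg_le_one B hB hs0.le
      _ = ‖f - B g‖ := one_mul _
      _ < ε / 2 := by rwa [dist_eq_norm] at hyd
  have h2 : ‖(NormedSpace.exp (s • (-B)) * B) g‖ ≤ ‖g‖ / s := by
    calc ‖(NormedSpace.exp (s • (-B)) * B) g‖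
        ≤ ‖NormedSpace.exp (s • (-B)) * B‖ * ‖g‖ := le_opNorm _ _
      _ ≤ (1 / s) * ‖g‖ := by gcongr; exact norm_expNeg_mul_le B hB hs0
      _ = ‖g‖ / s := by ring
  have h3 : ‖g‖ / s < ε / 2 := by
    rw [div_lt_iff₀ hs0]
    have h5 : 2 * ‖g‖ / ε ≤ s - 1 := by linarith
    rw [div_le_iff₀ hε] at h5
    nlinarith [norm_nonneg g]
  calc ‖NormedSpace.exp (s • (-B)) (f - B g) + (NormedSpace.exp (s • (-B)) * B) g‖
      ≤ ‖NormedSpace.exp (s • (-B)) (f - B g)‖ + ‖(NormedSpace.exp (s • (-B)) * B) g‖ :=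
        norm_add_le _ _
    _ < ε / 2 + ε / 2 := by linarith
    _ = ε := by ring

lemma hasDerivAt_F (A B : H →L[ℂ] H) (f : H) (t : ℝ) :
    HasDerivAt
      (fun u : ℝ => NormedSpace.exp (u • (-A)) ((A - B) (NormedSpace.exp (u • (-B)) f)))
      (-(NormedSpace.exp (t • (-A)) ((A ^ 2 - B ^ 2) (NormedSpace.exp (t • (-B)) f)))) t := by
  have hv : HasDerivAt (fun u : ℝ => NormedSpace.exp (u • (-B)) f)
      ((NormedSpace.exp (t • (-B)) * (-B)) f) t :=
    ((ContinuousLinearMap.apply ℂ H f).restrictScalars ℝ).hasFDerivAt.comp_hasDerivAt t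
      (hasDerivAt_exp_smul_const (-B) t)
  have hu : HasDerivAt (fun u : ℝ => (A - B) (NormedSpace.exp (u • (-B)) f))
      ((A - B) ((NormedSpace.exp (t • (-B)) * (-B)) f)) t :=
    ((A - B).restrictScalars ℝ).hasFDerivAt.comp_hasDerivAt t hv
  have hc : HasDerivAt
      (fun u : ℝ => (ContinuousLinearMap.restrictScalarsL ℂ H H ℝ ℝ)
        (NormedSpace.exp (u • (-A))))
      ((ContinuousLinearMap.restrictScalarsL ℂ H H ℝ ℝ)
        (NormedSpace.exp (t • (-A)) * (-A))) t :=
    (ContinuousLinearMap.restrictScalarsL ℂ H H ℝ ℝ).hasFDerivAt.comp_hasDerivAt t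
      (hasDerivAt_exp_smul_const (-A) t)
  have hF := hc.clm_apply hu
  have e1 : NormedSpace.exp (t • (-B)) * (-B) = (-B) * NormedSpace.exp (t • (-B)) :=
    (((((Commute.refl B).neg_left).smul_left t).exp_left).neg_right).eq
  have key : (NormedSpace.exp (t • (-A)) * (-A)) * ((A - B) * NormedSpace.exp (t • (-B)))
      + (NormedSpace.exp (t • (-A))) * ((A - B) * (NormedSpace.exp (t • (-B)) * (-B)))
      = -(NormedSpace.exp (t • (-A)) * ((A ^ 2 - B ^ 2) * NormedSpace.exp (t • (-B)))) := by
    rw [e1]; noncomm_ring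
  have hval := congrArg (fun (M : H →L[ℂ] H) => M f) key
  have hval2 : (ContinuousLinearMap.restrictScalarsL ℂ H H ℝ ℝ)
        (NormedSpace.exp (t • (-A)) * (-A)) ((A - B) (NormedSpace.exp (t • (-B)) f))
      + (ContinuousLinearMap.restrictScalarsL ℂ H H ℝ ℝ)
        (NormedSpace.exp (t • (-A))) ((A - B) ((NormedSpace.exp (t • (-B)) * (-B)) f))
      = -(NormedSpace.exp (t • (-A)) ((A ^ 2 - B ^ 2) (NormedSpace.exp (t • (-B)) f))) := by
    simp at hval ⊢
    abel_nf at hval ⊢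
    exact hval
  exact hval2 ▸ hF


end Helpers

set_option maxHeartbeats 1000000 in
set_option synthInstance.maxHeartbeats 400000 in
/-- Lemma 2.1(i): for positive contractions `A, B` with `ker B = {0}`,
`(A - B) f = ∫₀^∞ e^{-tA} (A² - B²) e^{-tB} f dt` as an improper strong integral. -/
theorem stmt_0 [TopologicalSpace.SeparableSpace H]
    (A B : H →L[ℂ] H)
    (hA : A.IsPositive) (hA1 : (1 - A).IsPositive)
    (hB : B.IsPositive) (hB1 : (1 - B).IsPositive)
    (hker : LinearMap.ker (B : H →ₗ[ℂ] H) = ⊥) (f : H) :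
    (∀ s : ℝ, IntervalIntegrable
        (fun t : ℝ => NormedSpace.exp ((-t : ℂ) • A)
          ((A ^ 2 - B ^ 2) (NormedSpace.exp ((-t : ℂ) • B) f)))
        MeasureTheory.volume 0 s) ∧
    Tendsto (fun s : ℝ => ∫ t in (0:ℝ)..s,
        NormedSpace.exp ((-t : ℂ) • A)
          ((A ^ 2 - B ^ 2) (NormedSpace.exp ((-t : ℂ) • B) f)))
      atTop (𝓝 ((A - B) f)) := by
  have hApos : 0 ≤ A := (nonneg_iff_isPositive A).2 hA
  have hBpos : 0 ≤ B := (nonneg_iff_isPositive B).2 hB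
  set G : ℝ → H := fun t => NormedSpace.exp (t • (-A))
    ((A ^ 2 - B ^ 2) (NormedSpace.exp (t • (-B)) f)) with hGdef
  have hfun : (fun t : ℝ => NormedSpace.exp ((-t : ℂ) • A)
      ((A ^ 2 - B ^ 2) (NormedSpace.exp ((-t : ℂ) • B) f))) = G :=
    funext fun t => by rw [hGdef, expNeg_eq, expNeg_eq]
  have hcont : Continuous G := by
    have c1 : Continuous fun t : ℝ => NormedSpace.exp (t • (-A)) :=
      continuous_iff_continuousAt.2 fun t => (hasDerivAt_exp_smul_const (-A) t).continuousAt
    have c2 : Continuous fun t : ℝ => NormedSpace.exp (t • (-B)) :=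
      continuous_iff_continuousAt.2 fun t => (hasDerivAt_exp_smul_const (-B) t).continuousAt
    exact c1.clm_apply ((A ^ 2 - B ^ 2).continuous.comp (c2.clm_apply continuous_const))
  rw [hfun]
  set F : ℝ → H := fun t => NormedSpace.exp (t • (-A))
    ((A - B) (NormedSpace.exp (t • (-B)) f)) with hFdef
  have hFTC : ∀ s : ℝ, ∫ t in (0:ℝ)..s, G t = F 0 - F s := by
    intro s
    have h1 : ∫ t in (0:ℝ)..s, -(G t) = F s - F 0 :=
      intervalIntegral.integral_eq_sub_of_hasDerivAt
        (fun t _ => hasDerivAt_F A B f t)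
        ((hcont.intervalIntegrable 0 s).neg)
    rw [intervalIntegral.integral_neg] at h1
    have := congrArg Neg.neg h1
    rw [neg_neg, neg_sub] at this
    exact this
  have hF0 : F 0 = (A - B) f := by
    simp [hFdef, NormedSpace.exp_zero]
  have hFtend : Tendsto F atTop (𝓝 0) := by
    refine squeeze_zero_norm'
      (a := fun s => ‖A - B‖ * ‖NormedSpace.exp (s • (-B)) f‖) ?_ ?_
    · filter_upwards [eventually_ge_atTop (0:ℝ)] with s hs
      calc ‖F s‖ ≤ ‖NormedSpace.exp (s • (-A))‖ * ‖(A - B) (NormedSpace.exp (s • (-B)) f)‖ :=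
            le_opNorm _ _
        _ ≤ 1 * (‖A - B‖ * ‖NormedSpace.exp (s • (-B)) f‖) := by
            gcongr
            · exact norm_expNeg_le_one A hApos hs
            · exact le_opNorm _ _
        _ = ‖A - B‖ * ‖NormedSpace.exp (s • (-B)) f‖ := one_mul _
    · simpa using (tendsto_expNeg_apply B hBpos hker f).norm.const_mul ‖A - B‖
  constructor
  · exact fun s => hcont.intervalIntegrable 0 s
  · rw [show (fun s => ∫ t in (0:ℝ)..s, G t) = fun s => F 0 - F s from funext hFTC, ← hF0]
    simpa using tendsto_const_nhds.sub hFtend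
end
end

section
/- Let T be a contraction on H and U_T its Schäffer unitary dilation on ℓ²(ℤ, H). Identifying H with the 0-th coordinate subspace of ℓ²(ℤ, H) and letting P_H be the orthogonal projection onto it, for every n ≥ 1 one has Tⁿ = P_H U_Tⁿ |_H. -/
open ContinuousLinearMap MeasureTheory Complex Filter Topology

noncomputable section

variable {H : Type} [NormedAddCommGroup H] [InnerProductSpace ℂ H] [CompleteSpace H]

/-- `ℓ²(ℤ, H)`, the space of square-summable bilateral `H`-valued sequences. -/
abbrev L2Z (H : Type) [NormedAddCommGroup H] [InnerProductSpace ℂ H] : Type :=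
  lp (fun _ : ℤ => H) 2

/-- Defect operator `D_T = (I - T*T)^{1/2}`. -/
def defect (T : H →L[ℂ] H) : H →L[ℂ] H := CFC.sqrt (1 - adjoint T * T)

/-- `U` is the Schäffer matrix dilation of the contraction `T` on `ℓ²(ℤ, H)`:
`(Ux)_{-1} = D_T x₀ - T* x₁`, `(Ux)₀ = T x₀ + D_{T*} x₁`, and `U` shifts the
remaining coordinates. -/
def IsSchaefferDilation (T : H →L[ℂ] H) (U : L2Z H →L[ℂ] L2Z H) : Prop :=
  ∀ x : L2Z H,
    (U x) (-1) = defect T (x 0) - adjoint T (x 1) ∧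
    (U x) 0 = T (x 0) + defect (adjoint T) (x 1) ∧
    (∀ n : ℤ, n ≤ -2 → (U x) n = x (n + 1)) ∧
    (∀ n : ℤ, 1 ≤ n → (U x) n = x (n + 1))

/-- If `U_T` is the Schäffer unitary dilation of the contraction `T`, then, identifying
`H` with the 0-th coordinate subspace of `ℓ²(ℤ, H)`, one has `Tⁿ = P_H U_Tⁿ |_H` for
all `n ≥ 1`. -/
theorem stmt_9
    (T : H →L[ℂ] H) (hT : ‖T‖ ≤ 1)
    (U : L2Z H →L[ℂ] L2Z H) (hU : IsSchaefferDilation T U)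
    (n : ℕ) (hn : 1 ≤ n) (h : H) :
    ((U ^ n) (lp.single 2 (0 : ℤ) h)) 0 = (T ^ n) h := by
  have key : ∀ k : ℕ, ((U ^ k) (lp.single 2 (0 : ℤ) h)) 0 = (T ^ k) h ∧
      ∀ m : ℤ, 1 ≤ m → ((U ^ k) (lp.single 2 (0 : ℤ) h)) m = 0 := by
    intro k
    induction k with
    | zero =>
      constructor
      · simp [lp.single_apply_self]
      · intro m hm
        simp only [pow_zero, one_apply]
        exact lp.single_apply_ne (E := fun _ : ℤ => H) 2 0 h (show m ≠ 0 by omega)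
    | succ k ih =>
      have hstep : (U ^ (k + 1)) (lp.single 2 (0 : ℤ) h)
          = U ((U ^ k) (lp.single 2 (0 : ℤ) h)) := by
        rw [pow_succ', ContinuousLinearMap.mul_apply]
      obtain ⟨h0, hpos⟩ := ih
      obtain ⟨_, hc0, _, hcpos⟩ := hU ((U ^ k) (lp.single 2 (0 : ℤ) h))
      constructor
      · rw [hstep, hc0, h0, hpos 1 le_rfl, map_zero, add_zero, pow_succ', ContinuousLinearMap.mul_apply]
      · intro m hm
        rw [hstep, hcpos m hm, hpos (m + 1) (by omega)]
  exact (key n).1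
end
end
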